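/- arXiv:2310.03497 — 4 statements merged into one kernel-verified Lean document; each statement's English description precedes it below -/
import Mathlib

section
/- For every k > 0 and every Schwartz function u : ℝ → ℂ, one has the exact identity Re ∬_{{(x,y) ∈ ℝ² : y ≥ x}} e^{−2k(y−x)} u(y) \overline{u(x)} dy dx = ∫_ℝ 2k |û(ξ)|² / (4k² + ξ²) dξ. In particular this quantity is comparable (with k-dependent constants) to the squared H^{−1}-norm ∫ (1+ξ²)^{−1}|û(ξ)|² dξ. (This double integral is the trace of the operator (k−∂)^{−1} u (k+∂)^{−1} ū.) -/
open MeasureTheory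

/-- Fourier transform with normalization `û(ξ) = (2π)^{-1/2} ∫ e^{-ixξ} u(x) dx`. -/
noncomputable def ft (f : ℝ → ℂ) (ξ : ℝ) : ℂ :=
  (((2 * Real.pi) ^ (-(1 : ℝ) / 2) : ℝ) : ℂ) *
    ∫ x : ℝ, Complex.exp (-Complex.I * x * ξ) * f x

/-!
Substituting `y = x + s` turns the double integral into `∫_{s ≥ 0} e^{-2ks} R(s) ds`, where
`R(s) = ∫ u(x + s) ū(x) dx` is the autocorrelation of `u`. By Plancherel,
`R(s) = ∫ e^{2πisξ} |𝓕u(ξ)|² dξ`, so by Fubini and `∫_{s ≥ 0} e^{-(2k - 2πiξ)s} ds = (2k - 2πiξ)⁻¹`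
the double integral equals `∫ |𝓕u(ξ)|² (2k - 2πiξ)⁻¹ dξ`, whose real part is
`∫ 2k |𝓕u(ξ)|² / (4k² + 4π²ξ²) dξ`; rescaling `ξ` passes from Mathlib's `𝓕` (kernel `e^{-2πixξ}`)
to `ft`. The comparison with the `H⁻¹` norm is the pointwise bound
`min(a, a⁻¹) / (1 + ξ²) ≤ a / (a² + ξ²) ≤ max(a, a⁻¹) / (1 + ξ²)` for `a = 2k`.
-/

open Complex Real FourierTransform SchwartzMap Set ComplexConjugate

lemma ft_eq_fourier (f : ℝ → ℂ) (ξ : ℝ) :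
    ft f ξ = (((2 * π) ^ (-(1 : ℝ) / 2) : ℝ) : ℂ) * 𝓕 f (ξ / (2 * π)) := by
  rw [ft, Real.fourier_real_eq_integral_exp_smul]
  congr 2 with x
  rw [smul_eq_mul]
  congr 2
  push_cast
  field_simp

lemma norm_ft_sq (f : ℝ → ℂ) (ξ : ℝ) :
    ‖ft f ξ‖ ^ 2 = (2 * π)⁻¹ * ‖𝓕 f (ξ / (2 * π))‖ ^ 2 := by
  rw [ft_eq_fourier, norm_mul, mul_pow, Complex.norm_real, Real.norm_eq_abs,
    abs_of_nonneg (by positivity), ← Real.rpow_natCast, ← Real.rpow_mul (by positivity)]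
  norm_num [Real.rpow_neg_one]

lemma integral_mul_norm_ft_sq (f : ℝ → ℂ) (w : ℝ → ℝ) :
    ∫ ξ, w ξ * ‖ft f ξ‖ ^ 2 = ∫ ξ, w (2 * π * ξ) * ‖𝓕 f ξ‖ ^ 2 := by
  have h2π : 0 < 2 * π := by positivity
  simp_rw [norm_ft_sq, mul_left_comm (w _)]
  rw [integral_const_mul]
  have := Measure.integral_comp_div (fun ξ => w (2 * π * ξ) * ‖𝓕 f ξ‖ ^ 2) (2 * π)
  simp only [mul_div_cancel₀ _ h2π.ne'] at this
  rw [this, abs_of_pos h2π, smul_eq_mul, inv_mul_cancel_left₀ h2π.ne']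

lemma integrable_norm_fourier_sq (u : 𝓢(ℝ, ℂ)) : Integrable (fun ξ => ‖𝓕 (⇑u) ξ‖ ^ 2) := by
  simpa [fourier_coe] using ((𝓕 u).memLp 2 volume).integrable_norm_pow two_ne_zero

lemma integrable_norm_ft_sq (u : 𝓢(ℝ, ℂ)) : Integrable (fun ξ => ‖ft u ξ‖ ^ 2) := by
  simp_rw [norm_ft_sq]
  exact ((integrable_norm_fourier_sq u).comp_div (by positivity)).const_mul _

noncomputable def autocorrelation (u : ℝ → ℂ) (s : ℝ) : ℂ :=
  ∫ x, u (x + s) * conj (u x)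

lemma fourier_comp_add_right (u : ℝ → ℂ) (s ξ : ℝ) :
    𝓕 (fun x => u (x + s)) ξ = 𝐞 (s * ξ) * 𝓕 u ξ := by
  have := congrFun (VectorFourier.fourierIntegral_comp_add_right 𝐞 volume (innerₗ ℝ) u s) ξ
  simp only [innerₗ_apply_apply, Real.inner_apply] at this
  exact this

theorem autocorrelation_eq_integral_fourier (u : 𝓢(ℝ, ℂ)) (s : ℝ) :
    autocorrelation u s = ∫ ξ, 𝐞 (s * ξ) * ((‖𝓕 (⇑u) ξ‖ ^ 2 : ℝ) : ℂ) := by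
  have hτ : ⇑(compSubConstCLM ℂ (-s) u) = fun x => u (x + s) := by ext; simp
  have plancherel := integral_inner_fourier_fourier u (compSubConstCLM ℂ (-s) u)
  simp only [fourier_coe, hτ, RCLike.inner_apply, fourier_comp_add_right] at plancherel
  rw [autocorrelation, ← plancherel]
  congr 1 with ξ
  rw [Complex.ofReal_pow, ← Complex.mul_conj']
  ring

lemma setIntegral_Ici_eq_setIntegral_Ici_zero {E : Type*} [NormedAddCommGroup E]
    [NormedSpace ℝ E] (g : ℝ → E) (x : ℝ) :
    ∫ y in Ici x, g y = ∫ s in Ici 0, g (x + s) := by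
  have := (measurePreserving_add_left volume x).setIntegral_preimage_emb
    (measurableEmbedding_addLeft x) g (Ici x)
  rwa [show (x + ·) ⁻¹' Ici x = Ici 0 by ext; simp, eq_comm] at this

theorem integral_integral_Ici_eq_integral_autocorrelation {K : ℝ → ℂ}
    (hK : IntegrableOn K (Ici 0)) (u : 𝓢(ℝ, ℂ)) :
    ∫ x, ∫ y in Ici x, K (y - x) * u y * conj (u x) =
      ∫ s in Ici 0, K s * autocorrelation u s := by
  simp_rw [setIntegral_Ici_eq_setIntegral_Ici_zero (fun y => K (_ - _) * u y * _),
    add_sub_cancel_left]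
  set M := SchwartzMap.seminorm ℝ 0 0 u
  have hint : Integrable (Function.uncurry fun x s => K s * u (x + s) * conj (u x))
      (volume.prod (volume.restrict (Ici 0))) := by
    refine ((u.integrable.norm.mul_prod hK.norm).const_mul M).mono' ?_ ?_
    · exact (hK.aestronglyMeasurable.comp_snd.mul (by fun_prop)).mul (by fun_prop)
    · refine .of_forall fun p => ?_
      simp only [Function.uncurry, norm_mul, RCLike.norm_conj]
      have := norm_le_seminorm ℝ u (p.1 + p.2)
      calc ‖K p.2‖ * ‖u (p.1 + p.2)‖ * ‖u p.1‖ ≤ ‖K p.2‖ * M * ‖u p.1‖ := by gcongr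
        _ = M * (‖u p.1‖ * ‖K p.2‖) := by ring
  rw [integral_integral_swap hint]
  congr 1 with s
  rw [autocorrelation, ← integral_const_mul]
  simp_rw [mul_assoc]

lemma integral_mul_integral_fourierChar_comm {μ : Measure ℝ} [SFinite μ] {K F : ℝ → ℂ}
    (hK : Integrable K μ) (hF : Integrable F) :
    ∫ s, K s * (∫ ξ, 𝐞 (s * ξ) * F ξ) ∂μ = ∫ ξ, F ξ * ∫ s, K s * 𝐞 (s * ξ) ∂μ := by
  have hint :
      Integrable (Function.uncurry fun s ξ => K s * (𝐞 (s * ξ) * F ξ)) (μ.prod volume) := by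
    refine (hK.norm.mul_prod hF.norm).mono' ?_ (.of_forall fun p => ?_)
    · exact hK.aestronglyMeasurable.comp_fst.mul
        ((by fun_prop : Continuous fun p : ℝ × ℝ => (𝐞 (p.1 * p.2) : ℂ)).aestronglyMeasurable.mul
          hF.aestronglyMeasurable.comp_snd)
    · simp [Function.uncurry, Circle.norm_coe]
  simp_rw [← integral_const_mul]
  rw [integral_integral_swap hint]
  congr 1 with ξ
  congr 1 with s
  ring

lemma integral_Ici_exp_mul_fourierChar {a : ℝ} (ha : 0 < a) (ξ : ℝ) :
    ∫ s in Ici 0, ((Real.exp (-a * s) : ℝ) : ℂ) * 𝐞 (s * ξ) =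
      ((a : ℂ) - (2 * π * ξ : ℝ) * I)⁻¹ := by
  have hre : (-((a : ℂ) - (2 * π * ξ : ℝ) * I)).re < 0 := by simpa using ha
  rw [integral_Ici_eq_integral_Ioi]
  convert integral_exp_mul_complex_Ioi hre 0 using 1
  · congr 1 with s
    rw [Real.fourierChar_apply, Complex.ofReal_exp, ← Complex.exp_add]
    push_cast
    ring_nf
  · rw [Complex.ofReal_zero, mul_zero, Complex.exp_zero, neg_div_neg_eq, one_div]

lemma re_inv_sub_mul_I (a b : ℝ) : ((a - b * I)⁻¹).re = a / (a ^ 2 + b ^ 2) := by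
  simp [Complex.inv_re, Complex.normSq_apply, sq]

lemma norm_inv_sub_mul_I_le {a : ℝ} (ha : 0 < a) (b : ℝ) : ‖((a : ℂ) - b * I)⁻¹‖ ≤ a⁻¹ := by
  rw [norm_inv]
  refine inv_anti₀ ha ?_
  simpa [abs_of_pos ha] using Complex.abs_re_le_norm ((a : ℂ) - b * I)

theorem integral_trace_eq_integral_fourier {k : ℝ} (hk : 0 < k) (u : 𝓢(ℝ, ℂ)) :
    ∫ x, ∫ y in Ici x, ((Real.exp (-2 * k * (y - x)) : ℝ) : ℂ) * u y * conj (u x) =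
      ∫ ξ, ((‖𝓕 (⇑u) ξ‖ ^ 2 : ℝ) : ℂ) * ((2 * k : ℝ) - (2 * π * ξ : ℝ) * I)⁻¹ := by
  have hK : IntegrableOn (fun s => ((Real.exp (-(2 * k) * s) : ℝ) : ℂ)) (Ici 0) := by
    rw [integrableOn_Ici_iff_integrableOn_Ioi]
    exact (exp_neg_integrableOn_Ioi 0 (by linarith)).ofReal
  simp_rw [show ∀ t, -2 * k * t = -(2 * k) * t from fun t => by ring,
    integral_integral_Ici_eq_integral_autocorrelation hK,
    autocorrelation_eq_integral_fourier]
  rw [integral_mul_integral_fourierChar_comm hK (F := fun ξ => ((‖𝓕 (⇑u) ξ‖ ^ 2 : ℝ) : ℂ))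
    (integrable_norm_fourier_sq u).ofReal]
  simp_rw [integral_Ici_exp_mul_fourierChar (by linarith : 0 < 2 * k)]

theorem re_integral_trace_eq_integral_fourier {k : ℝ} (hk : 0 < k) (u : 𝓢(ℝ, ℂ)) :
    (∫ x, ∫ y in Ici x, ((Real.exp (-2 * k * (y - x)) : ℝ) : ℂ) * u y * conj (u x)).re =
      ∫ ξ, 2 * k / ((2 * k) ^ 2 + (2 * π * ξ) ^ 2) * ‖𝓕 (⇑u) ξ‖ ^ 2 := by
  have hint : Integrable fun ξ =>
      ((‖𝓕 (⇑u) ξ‖ ^ 2 : ℝ) : ℂ) * ((2 * k : ℝ) - (2 * π * ξ : ℝ) * I)⁻¹ :=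
    (integrable_norm_fourier_sq u).ofReal.mul_bdd (by fun_prop)
      (.of_forall fun ξ => norm_inv_sub_mul_I_le (by linarith) _)
  rw [integral_trace_eq_integral_fourier hk, ← RCLike.re_to_complex, ← integral_re hint]
  congr 1 with ξ
  rw [RCLike.re_to_complex, Complex.re_ofReal_mul, re_inv_sub_mul_I, mul_comm]

lemma min_mul_inv_one_add_sq_le {a : ℝ} (ha : 0 < a) (ξ : ℝ) :
    min a a⁻¹ * (1 + ξ ^ 2)⁻¹ ≤ a / (a ^ 2 + ξ ^ 2) := by
  rw [← div_eq_mul_inv, div_le_div_iff₀ (by positivity) (by positivity)]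
  have h₁ : min a a⁻¹ * a ^ 2 ≤ a := by
    calc min a a⁻¹ * a ^ 2 ≤ a⁻¹ * a ^ 2 := by gcongr; exact min_le_right _ _
      _ = a := by field_simp
  nlinarith [min_le_left a a⁻¹, sq_nonneg ξ]

lemma div_sq_add_sq_le_max_mul {a : ℝ} (ha : 0 < a) (ξ : ℝ) :
    a / (a ^ 2 + ξ ^ 2) ≤ max a a⁻¹ * (1 + ξ ^ 2)⁻¹ := by
  rw [← div_eq_mul_inv, div_le_div_iff₀ (by positivity) (by positivity)]
  have h₁ : a ≤ max a a⁻¹ * a ^ 2 := by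
    calc a = a⁻¹ * a ^ 2 := by field_simp
      _ ≤ max a a⁻¹ * a ^ 2 := by gcongr; exact le_max_right _ _
  nlinarith [le_max_left a a⁻¹, sq_nonneg ξ]

theorem integral_weighted_norm_ft_sq_bounds {k : ℝ} (hk : 0 < k) (u : 𝓢(ℝ, ℂ)) :
    min (2 * k) (2 * k)⁻¹ * ∫ ξ, (1 + ξ ^ 2)⁻¹ * ‖ft u ξ‖ ^ 2 ≤
        ∫ ξ, 2 * k * ‖ft u ξ‖ ^ 2 / (4 * k ^ 2 + ξ ^ 2) ∧
      ∫ ξ, 2 * k * ‖ft u ξ‖ ^ 2 / (4 * k ^ 2 + ξ ^ 2) ≤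
        max (2 * k) (2 * k)⁻¹ * ∫ ξ, (1 + ξ ^ 2)⁻¹ * ‖ft u ξ‖ ^ 2 := by
  have h2k : 0 < 2 * k := by linarith
  have hweight : ∀ ξ, 2 * k * ‖ft u ξ‖ ^ 2 / (4 * k ^ 2 + ξ ^ 2) =
      2 * k / ((2 * k) ^ 2 + ξ ^ 2) * ‖ft u ξ‖ ^ 2 := fun ξ => by ring
  have hA := integrable_norm_ft_sq u
  have hp : Integrable fun ξ => (1 + ξ ^ 2)⁻¹ * ‖ft u ξ‖ ^ 2 :=
    hA.bdd_mul (c := 1) (by fun_prop) (.of_forall fun ξ => by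
      rw [norm_inv, Real.norm_of_nonneg (by positivity)]
      exact inv_le_one_of_one_le₀ (by nlinarith [sq_nonneg ξ]))
  have hq : Integrable fun ξ => 2 * k / ((2 * k) ^ 2 + ξ ^ 2) * ‖ft u ξ‖ ^ 2 :=
    (hp.const_mul (max (2 * k) (2 * k)⁻¹)).mono'
      ((continuous_const.div (by fun_prop) fun ξ => by positivity).aestronglyMeasurable.mul
        hA.aestronglyMeasurable) (.of_forall fun ξ => by
      rw [Real.norm_of_nonneg (by positivity), ← mul_assoc]
      gcongr
      exact div_sq_add_sq_le_max_mul h2k ξ)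
  simp_rw [hweight, ← integral_const_mul, ← mul_assoc]
  constructor
  · exact integral_mono_of_nonneg (.of_forall fun ξ => by positivity) hq (.of_forall fun ξ =>
      mul_le_mul_of_nonneg_right (min_mul_inv_one_add_sq_le h2k ξ) (by positivity))
  · refine integral_mono_of_nonneg (.of_forall fun ξ => by positivity)
      (by simpa only [mul_assoc] using hp.const_mul _) (.of_forall fun ξ =>
      mul_le_mul_of_nonneg_right (div_sq_add_sq_le_max_mul h2k ξ) (by positivity))

theorem trace_identity (k : ℝ) (hk : 0 < k) :
    (∀ u : SchwartzMap ℝ ℂ,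
      (∫ x : ℝ, ∫ y in Set.Ici x,
          ((Real.exp (-2 * k * (y - x)) : ℝ) : ℂ) * u y * (starRingEnd ℂ) (u x)).re
        = ∫ ξ : ℝ, 2 * k * ‖ft (fun x => u x) ξ‖ ^ 2 / (4 * k ^ 2 + ξ ^ 2)) ∧
    ∃ c C : ℝ, 0 < c ∧ 0 < C ∧ ∀ u : SchwartzMap ℝ ℂ,
      (c * ∫ ξ : ℝ, (1 + ξ ^ 2)⁻¹ * ‖ft (fun x => u x) ξ‖ ^ 2) ≤
          (∫ ξ : ℝ, 2 * k * ‖ft (fun x => u x) ξ‖ ^ 2 / (4 * k ^ 2 + ξ ^ 2)) ∧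
        (∫ ξ : ℝ, 2 * k * ‖ft (fun x => u x) ξ‖ ^ 2 / (4 * k ^ 2 + ξ ^ 2)) ≤
          C * ∫ ξ : ℝ, (1 + ξ ^ 2)⁻¹ * ‖ft (fun x => u x) ξ‖ ^ 2 := by
  have h2k : 0 < 2 * k := by linarith
  refine ⟨fun u => ?_, _, _, lt_min h2k (inv_pos.2 h2k), lt_max_of_lt_left h2k,
    integral_weighted_norm_ft_sq_bounds hk⟩
  rw [re_integral_trace_eq_integral_fourier hk,
    ← integral_mul_norm_ft_sq u fun ξ => 2 * k / ((2 * k) ^ 2 + ξ ^ 2)]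
  congr 1 with ξ
  ring
end

section
/- Let k ∈ ℝ and let u, f : ℝ → ℂ be smooth functions. Then u‴·f = u·((k−∂)³f) + (k+∂)³(u f) − 8k³ u f + (k−∂)( (3u′ + 6k u) · ((k+∂)f) ), as an identity of functions on ℝ; equivalently, the multiplication operator by u‴ equals u(k−∂)³ + (k+∂)³u − 8k³u + (k−∂)(3u′ + 6ku)(k+∂). -/
/-- The operator `(k + ∂)g = k g + g'`. -/
noncomputable def opP (k : ℝ) (g : ℝ → ℂ) : ℝ → ℂ := fun x => (k : ℂ) * g x + deriv g x

/-- The operator `(k - ∂)g = k g - g'`. -/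
noncomputable def opM (k : ℝ) (g : ℝ → ℂ) : ℝ → ℂ := fun x => (k : ℂ) * g x - deriv g x

theorem third_derivative_operator_identity (k : ℝ) (u f : ℝ → ℂ)
    (hu : ContDiff ℝ (⊤ : ℕ∞) u) (hf : ContDiff ℝ (⊤ : ℕ∞) f) (x : ℝ) :
    deriv (deriv (deriv u)) x * f x =
      u x * opM k (opM k (opM k f)) x
        + opP k (opP k (opP k (fun y => u y * f y))) x
        - 8 * (k : ℂ) ^ 3 * u x * f x
        + opM k (fun y => (3 * deriv u y + 6 * (k : ℂ) * u y) * opP k f y) x := by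
  have hu0 : ContDiff ℝ (↑(⊤:ℕ∞)) u := hu.of_le (by simp)
  have hf0 : ContDiff ℝ (↑(⊤:ℕ∞)) f := hf.of_le (by simp)
  have hu1 : ContDiff ℝ (↑(⊤:ℕ∞)) (deriv u) := (contDiff_infty_iff_deriv.mp hu0).2
  have hu2 : ContDiff ℝ (↑(⊤:ℕ∞)) (deriv (deriv u)) := (contDiff_infty_iff_deriv.mp hu1).2
  have hf1 : ContDiff ℝ (↑(⊤:ℕ∞)) (deriv f) := (contDiff_infty_iff_deriv.mp hf0).2
  have hf2 : ContDiff ℝ (↑(⊤:ℕ∞)) (deriv (deriv f)) := (contDiff_infty_iff_deriv.mp hf1).2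
  have du : Differentiable ℝ u := hu0.differentiable (by simp)
  have du1 : Differentiable ℝ (deriv u) := hu1.differentiable (by simp)
  have du2 : Differentiable ℝ (deriv (deriv u)) := hu2.differentiable (by simp)
  have df : Differentiable ℝ f := hf0.differentiable (by simp)
  have df1 : Differentiable ℝ (deriv f) := hf1.differentiable (by simp)
  have df2 : Differentiable ℝ (deriv (deriv f)) := hf2.differentiable (by simp)
  have opPdef : ∀ g : ℝ → ℂ, opP k g = fun y => (k:ℂ) * g y + deriv g y := fun g => rfl
  have opMdef : ∀ g : ℝ → ℂ, opM k g = fun y => (k:ℂ) * g y - deriv g y := fun g => rfl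
  simp only [opPdef, opMdef]
  simp (disch := fun_prop) only [deriv_fun_add, deriv_fun_sub, deriv_fun_mul, deriv_const_mul,
    deriv_const', mul_zero, zero_mul, add_zero, zero_add, sub_zero]
  ring
end

section
/- Let a, b, c₁, c₂ ∈ ℝ with b ≠ 0, and set d₁ = −a²/(3b), d₂ = −a/(3b), d₃ = 2a³/(27b²), c₃ = c₁ − a c₂/(3b). Suppose u : ℝ × ℝ → ℂ is smooth and solves ∂_t u + i a ∂_x² u + b ∂_x³ u + i c₁ |u|² u + c₂ |u|² ∂_x u = 0, and define v by v(x,t) = u(x − d₁ t, t) e^{−i(d₂(x − d₁ t) + d₃ t)} (so that u(x,t) = v(x + d₁ t, t) e^{i(d₂ x + d₃ t)}). Then v solves ∂_t v + b ∂_x³ v + i c₃ |v|² v + c₂ |v|² ∂_x v = 0, with v(x,0) = u(x,0) e^{−i d₂ x}. -/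
set_option maxHeartbeats 1000000

private lemma hasDerivAt_cexp_linear (k C : ℂ) (t : ℝ) :
    HasDerivAt (fun y : ℝ => Complex.exp (k * y + C)) (k * Complex.exp (k * t + C)) t := by
  have h1 : HasDerivAt (fun y : ℝ => k * (y:ℂ) + C) k t := by
    simpa using ((Complex.ofRealCLM.hasDerivAt (x := t)).const_mul k).add_const C
  simpa [mul_comm] using h1.cexp

private lemma hasDerivAt_shift (f : ℝ → ℂ) (hf : ContDiff ℝ (⊤:ℕ∞) f) (s y : ℝ) :
    HasDerivAt (fun y : ℝ => f (y - s)) (deriv f (y - s)) y := by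
  have hdiff : DifferentiableAt ℝ (fun y : ℝ => f (y - s)) y :=
    ((hf.differentiable (by simp)).comp (differentiable_id.sub_const s)) y
  have hfs := hdiff.hasDerivAt
  rwa [deriv_comp_sub_const] at hfs

private lemma deriv_shift_mul_exp (f : ℝ → ℂ) (hf : ContDiff ℝ (⊤:ℕ∞) f) (s : ℝ) (k C : ℂ) :
    deriv (fun y : ℝ => f (y - s) * Complex.exp (k * y + C))
      = fun y : ℝ => (deriv f (y - s) + k * f (y - s)) * Complex.exp (k * y + C) := by
  funext y
  have h := ((hasDerivAt_shift f hf s y).mul (hasDerivAt_cexp_linear k C y)).deriv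
  rw [show (fun y : ℝ => f (y - s) * Complex.exp (k * y + C)) = (fun y : ℝ => f (y - s)) * (fun y : ℝ => Complex.exp (k * y + C)) from rfl, h]; ring

private lemma contDiff_D (f : ℝ → ℂ) (hf : ContDiff ℝ (⊤:ℕ∞) f) (k : ℂ) :
    ContDiff ℝ (⊤:ℕ∞) (fun y => deriv f y + k * f y) :=
  ((contDiff_infty_iff_deriv.mp hf).2).add (contDiff_const.mul hf)

private lemma deriv_D (f : ℝ → ℂ) (hf : ContDiff ℝ (⊤:ℕ∞) f) (k : ℂ) :
    deriv (fun y => deriv f y + k * f y) = fun y => deriv (deriv f) y + k * deriv f y := by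
  funext z
  have hf1 : ContDiff ℝ (⊤:ℕ∞) (deriv f) := (contDiff_infty_iff_deriv.mp hf).2
  exact (((hf1.differentiable (by simp) z).hasDerivAt).add
    (((hf.differentiable (by simp) z).hasDerivAt).const_mul k)).deriv

private lemma third_deriv_shift_mul_exp (f : ℝ → ℂ) (hf : ContDiff ℝ (⊤:ℕ∞) f) (s : ℝ) (k C : ℂ) :
    deriv (deriv (deriv (fun y : ℝ => f (y - s) * Complex.exp (k * y + C))))
      = fun y : ℝ => (deriv (deriv (deriv f)) (y - s) + 3*k*(deriv (deriv f) (y - s))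
          + 3*k^2*(deriv f (y - s)) + k^3*(f (y - s))) * Complex.exp (k * y + C) := by
  have hf1 : ContDiff ℝ (⊤:ℕ∞) (deriv f) := (contDiff_infty_iff_deriv.mp hf).2
  have hf2 : ContDiff ℝ (⊤:ℕ∞) (deriv (deriv f)) := (contDiff_infty_iff_deriv.mp hf1).2
  have hDf : ContDiff ℝ (⊤:ℕ∞) (fun y => deriv f y + k * f y) := contDiff_D f hf k
  -- first derivative
  have h1 := deriv_shift_mul_exp f hf s k C
  -- second derivative
  have h2 : deriv (deriv (fun y : ℝ => f (y - s) * Complex.exp (k * y + C)))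
      = fun y : ℝ => ((deriv (fun z => deriv f z + k * f z)) (y - s)
          + k * (deriv f (y - s) + k * f (y - s))) * Complex.exp (k * y + C) := by
    rw [h1]
    exact deriv_shift_mul_exp (fun z => deriv f z + k * f z) hDf s k C
  rw [deriv_D f hf k] at h2
  -- rewrite second derivative into canonical shifted form
  have h2' : deriv (deriv (fun y : ℝ => f (y - s) * Complex.exp (k * y + C)))
      = fun y : ℝ => (fun z => deriv (deriv f) z + (2*k) * deriv f z + k^2 * f z) (y - s)
          * Complex.exp (k * y + C) := by
    rw [h2]; funext y; ring
  have hG : ContDiff ℝ (⊤:ℕ∞) (fun z => deriv (deriv f) z + (2*k) * deriv f z + k^2 * f z) :=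
    (((contDiff_infty_iff_deriv.mp hf1).2).add (contDiff_const.mul hf1)).add (contDiff_const.mul hf)
  have h3 : deriv (deriv (deriv (fun y : ℝ => f (y - s) * Complex.exp (k * y + C))))
      = fun y : ℝ => (deriv (fun z => deriv (deriv f) z + (2*k) * deriv f z + k^2 * f z) (y - s)
          + k * ((fun z => deriv (deriv f) z + (2*k) * deriv f z + k^2 * f z) (y - s)))
          * Complex.exp (k * y + C) := by
    rw [h2']
    exact deriv_shift_mul_exp _ hG s k C
  have hder : deriv (fun z => deriv (deriv f) z + (2*k) * deriv f z + k^2 * f z)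
      = fun z => deriv (deriv (deriv f)) z + (2*k) * deriv (deriv f) z + k^2 * deriv f z := by
    funext z
    have hf3 : ContDiff ℝ (⊤:ℕ∞) (deriv (deriv (deriv f))) := (contDiff_infty_iff_deriv.mp hf2).2
    exact (((hf2.differentiable (by simp) z).hasDerivAt.add
        (((hf1.differentiable (by simp) z).hasDerivAt).const_mul (2*k))).add
        (((hf.differentiable (by simp) z).hasDerivAt).const_mul (k^2))).deriv
  rw [h3, hder]
  funext y
  ring

private lemma hasDerivAt_time (u : ℝ → ℝ → ℂ)
    (hu : ContDiff ℝ (⊤ : ℕ∞) (fun q : ℝ × ℝ => u q.1 q.2)) (x d₁ t : ℝ) :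
    HasDerivAt (fun s : ℝ => u (x - d₁ * s) s)
      (deriv (fun s => u (x - d₁ * t) s) t
        - d₁ * deriv (fun y => u y t) (x - d₁ * t)) t := by
  set w : ℝ × ℝ → ℂ := fun q => u q.1 q.2 with hw
  set p : ℝ × ℝ := (x - d₁ * t, t) with hp
  have hwd : HasFDerivAt w (fderiv ℝ w p) p :=
    (hu.differentiable (by simp) p).hasFDerivAt
  have hL : HasDerivAt (fun s : ℝ => ((x - d₁ * s, s) : ℝ × ℝ)) ((-d₁, 1) : ℝ × ℝ) t := by
    have h1 : HasDerivAt (fun s : ℝ => x - d₁ * s) (-d₁) t := by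
      simpa using ((hasDerivAt_id t).const_mul d₁).const_sub x
    exact h1.prodMk (hasDerivAt_id t)
  have hcomp : HasDerivAt (fun s : ℝ => u (x - d₁ * s) s) (fderiv ℝ w p (-d₁, 1)) t := by
    exact HasFDerivAt.comp_hasDerivAt (f := fun s : ℝ => ((x - d₁ * s, s) : ℝ × ℝ)) t hwd hL
  have hA : HasDerivAt (fun y : ℝ => u y t) (fderiv ℝ w p (1, 0)) (x - d₁ * t) := by
    have hc : HasDerivAt (fun y : ℝ => ((y, t) : ℝ × ℝ)) ((1, 0) : ℝ × ℝ) (x - d₁ * t) :=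
      (hasDerivAt_id _).prodMk (hasDerivAt_const _ t)
    exact HasFDerivAt.comp_hasDerivAt (f := fun y : ℝ => ((y, t) : ℝ × ℝ)) _ hwd hc
  have hB : HasDerivAt (fun s : ℝ => u (x - d₁ * t) s) (fderiv ℝ w p (0, 1)) t := by
    have hc : HasDerivAt (fun s : ℝ => ((x - d₁ * t, s) : ℝ × ℝ)) ((0, 1) : ℝ × ℝ) t :=
      (hasDerivAt_const _ _).prodMk (hasDerivAt_id _)
    exact HasFDerivAt.comp_hasDerivAt (f := fun s : ℝ => ((x - d₁ * t, s) : ℝ × ℝ)) _ hwd hc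
  rw [hA.deriv, hB.deriv]
  have hsplit : fderiv ℝ w p (-d₁, 1)
      = fderiv ℝ w p (0, 1) - d₁ * fderiv ℝ w p (1, 0) := by
    have : ((-d₁, 1) : ℝ × ℝ) = ((0:ℝ), (1:ℝ)) + (-d₁) • ((1:ℝ), (0:ℝ)) := by
      simp [Prod.ext_iff]
    rw [this, map_add, map_smul]
    simp [Complex.real_smul]
    ring
  rwa [hsplit] at hcomp

open Complex in
private lemma final_algebra (a b c₁ c₂ d₁ d₂ d₃ c₃ : ℝ) (hb : b ≠ 0)
    (hd₁ : d₁ = -a ^ 2 / (3 * b)) (hd₂ : d₂ = -a / (3 * b))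
    (hd₃ : d₃ = 2 * a ^ 3 / (27 * b ^ 2)) (hc₃ : c₃ = c₁ - a * c₂ / (3 * b))
    (u0 u1 u2 u3 B E : ℂ) (N : ℝ)
    (heq : B + I*a*u2 + b*u3 + I*c₁*N*u0 + c₂*N*u1 = 0) :
    ((B - d₁*u1)*E + u0*((-I*((d₃ - d₂*d₁ : ℝ):ℂ))*E))
      + b*((u3 + 3*(-I*d₂)*u2 + 3*(-I*(d₂:ℂ))^2*u1 + (-I*(d₂:ℂ))^3*u0)*E)
      + I*c₃*N*(u0*E) + c₂*N*((u1 + (-I*d₂)*u0)*E) = 0 := by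
  have hb' : (b:ℂ) ≠ 0 := Complex.ofReal_ne_zero.mpr hb
  have e1 : (d₁:ℂ) = -a^2/(3*b) := by exact_mod_cast congrArg Complex.ofReal hd₁
  have e2 : (d₂:ℂ) = -a/(3*b) := by exact_mod_cast congrArg Complex.ofReal hd₂
  have e3 : (d₃:ℂ) = 2*a^3/(27*b^2) := by exact_mod_cast congrArg Complex.ofReal hd₃
  have e4 : (c₃:ℂ) = c₁ - a*c₂/(3*b) := by exact_mod_cast congrArg Complex.ofReal hc₃
  have h1 : 3*(b:ℂ)*d₁ = -a^2 := by rw [e1]; field_simp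
  have h2 : 3*(b:ℂ)*d₂ = -a := by rw [e2]; field_simp
  have h3 : 27*(b:ℂ)^2*d₃ = 2*a^3 := by rw [e3]; field_simp
  have h4 : 3*(b:ℂ)*c₃ = 3*b*c₁ - a*c₂ := by rw [e4]; field_simp
  have hI : (Complex.I)^2 = -1 := Complex.I_sq
  have key : 27*(b:ℂ)^2 * (((B - d₁*u1)*E + u0*((-I*((d₃ - d₂*d₁ : ℝ):ℂ))*E))
      + b*((u3 + 3*(-I*d₂)*u2 + 3*(-I*(d₂:ℂ))^2*u1 + (-I*(d₂:ℂ))^3*u0)*E)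
      + I*c₃*N*(u0*E) + c₂*N*((u1 + (-I*d₂)*u0)*E)) = 0 := by
    push_cast
    linear_combination (27*(b:ℂ)^2*E) * heq
      + ((-9)*(b:ℂ)*u1*E + (-3)*a*Complex.I*u0*E) * h1
      + ((-27)*Complex.I*(b:ℂ)^2*u2*E + (-9)*b*u1*E*(3*b*d₂ - a) + 9*Complex.I*b*d₁*u0*E
          + Complex.I*u0*E*((3*b*(d₂:ℂ))^2 - 3*a*b*d₂ + a^2) + (-9)*b*c₂*N*Complex.I*u0*E) * h2
      + ((-Complex.I)*u0*E) * h3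
      + (9*(b:ℂ)*N*Complex.I*u0*E) * h4
      + (81*(b:ℂ)^3*d₂^2*u1*E + (-27)*(b:ℂ)^3*Complex.I*(d₂:ℂ)^3*u0*E) * hI
  have h27 : (27:ℂ)*(b:ℂ)^2 ≠ 0 := by
    simp [hb']
  rcases mul_eq_zero.mp key with h | h
  · exact absurd h h27
  · exact h

theorem gauge_transform (a b c₁ c₂ : ℝ) (hb : b ≠ 0) (u v : ℝ → ℝ → ℂ)
    (hu : ContDiff ℝ (⊤ : ℕ∞) (fun q : ℝ × ℝ => u q.1 q.2))
    (heq : ∀ x t : ℝ,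
      deriv (fun s => u x s) t
          + Complex.I * (a : ℂ) * deriv (deriv (fun y => u y t)) x
          + (b : ℂ) * deriv (deriv (deriv (fun y => u y t))) x
          + Complex.I * (c₁ : ℂ) * ((‖u x t‖ ^ 2 : ℝ) : ℂ) * u x t
          + (c₂ : ℂ) * ((‖u x t‖ ^ 2 : ℝ) : ℂ) * deriv (fun y => u y t) x = 0)
    (d₁ d₂ d₃ c₃ : ℝ)
    (hd₁ : d₁ = -a ^ 2 / (3 * b)) (hd₂ : d₂ = -a / (3 * b))
    (hd₃ : d₃ = 2 * a ^ 3 / (27 * b ^ 2)) (hc₃ : c₃ = c₁ - a * c₂ / (3 * b))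
    (hv : ∀ x t : ℝ,
      v x t = u (x - d₁ * t) t *
        Complex.exp (-Complex.I * ((d₂ * (x - d₁ * t) + d₃ * t : ℝ) : ℂ))) :
    (∀ x t : ℝ,
      deriv (fun s => v x s) t
          + (b : ℂ) * deriv (deriv (deriv (fun y => v y t))) x
          + Complex.I * (c₃ : ℂ) * ((‖v x t‖ ^ 2 : ℝ) : ℂ) * v x t
          + (c₂ : ℂ) * ((‖v x t‖ ^ 2 : ℝ) : ℂ) * deriv (fun y => v y t) x = 0) ∧
      ∀ x : ℝ, v x 0 = u x 0 * Complex.exp (-Complex.I * (d₂ : ℂ) * (x : ℂ)) := by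
  constructor
  · intro x t
    have hfpair : ContDiff ℝ (⊤:ℕ∞) (fun q : ℝ × ℝ => u q.1 q.2) := hu.of_le (by simp)
    have hf : ContDiff ℝ (⊤:ℕ∞) (fun z : ℝ => u z t) :=
      hfpair.comp (contDiff_id.prodMk contDiff_const)
    set k : ℂ := -Complex.I * (d₂:ℂ) with hk
    set C : ℂ := -Complex.I * (((d₃ - d₂ * d₁) * t : ℝ) : ℂ) with hC
    set β : ℂ := -Complex.I * ((d₃ - d₂ * d₁ : ℝ) : ℂ) with hβ
    set α : ℂ := -Complex.I * ((d₂ * x : ℝ) : ℂ) with hα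
    have hvfun : (fun y => v y t)
        = fun y : ℝ => (fun z : ℝ => u z t) (y - d₁ * t) * Complex.exp (k * y + C) := by
      funext y
      rw [hv]
      have harg : -Complex.I * ((d₂ * (y - d₁ * t) + d₃ * t : ℝ) : ℂ) = k * y + C := by
        rw [hk, hC]; push_cast; ring
      rw [harg]
    have hvtfun : (fun s => v x s)
        = fun s : ℝ => u (x - d₁ * s) s * Complex.exp (β * s + α) := by
      funext s
      rw [hv]
      have harg : -Complex.I * ((d₂ * (x - d₁ * s) + d₃ * s : ℝ) : ℂ) = β * s + α := by
        rw [hβ, hα]; push_cast; ring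
      rw [harg]
    have h3 := third_deriv_shift_mul_exp (fun z : ℝ => u z t) hf (d₁ * t) k C
    have h1d := deriv_shift_mul_exp (fun z : ℝ => u z t) hf (d₁ * t) k C
    have hTd := ((hasDerivAt_time u hu x d₁ t).mul (hasDerivAt_cexp_linear β α t)).deriv
    have hnorm : ‖v x t‖ = ‖u (x - d₁ * t) t‖ := by
      rw [hv, norm_mul]
      have h1 : ‖Complex.exp (-Complex.I * ((d₂ * (x - d₁ * t) + d₃ * t : ℝ) : ℂ))‖ = 1 := by
        rw [Complex.norm_exp]
        simp
      rw [h1, mul_one]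
    have hEt : Complex.exp (β * t + α) = Complex.exp (k * x + C) := by
      have harg : β * t + α = k * x + C := by rw [hβ, hα, hk, hC]; push_cast; ring
      rw [harg]
    have hvxt : v x t = u (x - d₁ * t) t * Complex.exp (k * x + C) := by
      rw [hv]
      have harg : -Complex.I * ((d₂ * (x - d₁ * t) + d₃ * t : ℝ) : ℂ) = k * x + C := by
        rw [hk, hC]; push_cast; ring
      rw [harg]
    rw [hvtfun, show (fun s : ℝ => u (x - d₁ * s) s * Complex.exp (β * s + α)) = (fun s : ℝ => u (x - d₁ * s) s) * (fun s : ℝ => Complex.exp (β * s + α)) from rfl, hTd, hvfun, h3, h1d, hnorm, hvxt, hEt]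
    exact final_algebra a b c₁ c₂ d₁ d₂ d₃ c₃ hb hd₁ hd₂ hd₃ hc₃
      (u (x - d₁ * t) t)
      (deriv (fun z : ℝ => u z t) (x - d₁ * t))
      (deriv (deriv (fun z : ℝ => u z t)) (x - d₁ * t))
      (deriv (deriv (deriv (fun z : ℝ => u z t))) (x - d₁ * t))
      (deriv (fun s => u (x - d₁ * t) s) t)
      (Complex.exp (k * x + C))
      (‖u (x - d₁ * t) t‖ ^ 2)
      (heq (x - d₁ * t) t)
  · intro x
    rw [hv]
    have h0 : x - d₁ * 0 = x := by ring
    rw [h0]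
    have harg : -Complex.I * ((d₂ * x + d₃ * 0 : ℝ) : ℂ) = -Complex.I * (d₂:ℂ) * (x:ℂ) := by
      push_cast; ring
    rw [harg]
end

section
/- Let a, b ∈ ℝ, k > 0, and let u : ℝ → ℂ be Schwartz. Write L u = i a u″ + b u‴. Then Re ∬_{{(x,y) ∈ ℝ² : y ≥ x}} e^{−2k(y−x)} [ (Lu)(y) \overline{u(x)} + u(y) \overline{(Lu)(x)} ] dy dx = 0; i.e., the real part of the trace of (k−∂)^{−1}(Lu)(k+∂)^{−1}ū + (k−∂)^{−1}u(k+∂)^{−1}\overline{Lu} vanishes. -/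
/-!
The inner integral is `(R (L u)) x * conj (u x) + (R u) x * conj ((L u) x)` with `R = (2k - ∂)⁻¹`.
On Schwartz functions `R` commutes with `∂`, since `(R u)'` and `R (u')` both equal `2k R u - u`,
and integration by parts moves `∂` across the pairing `∫ (R f) * conj g` at the cost of a sign.
So `∂²` is symmetric and `∂³` antisymmetric for this pairing, `L = i a ∂² + b ∂³` is skew,
and the two terms cancel: the whole integral vanishes, not only its real part.
-/

open MeasureTheory Filter Set Topology

noncomputable section

namespace LinearPartTrace

/-- `invSubDeriv c f = (c - ∂)⁻¹ f`. -/
def invSubDeriv (c : ℝ) (f : ℝ → ℂ) (x : ℝ) : ℂ :=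
  ∫ y in Ici x, (Real.exp (-(c * (y - x))) : ℂ) * f y

variable {c : ℝ} {f f' g : ℝ → ℂ}

lemma norm_exp_mul_le (hc : 0 ≤ c) {x y : ℝ} (hxy : x ≤ y) (z : ℂ) :
    ‖(Real.exp (-(c * (y - x))) : ℂ) * z‖ ≤ ‖z‖ := by
  rw [norm_mul, Complex.norm_real, Real.norm_of_nonneg (Real.exp_pos _).le]
  exact mul_le_of_le_one_left (norm_nonneg _) (Real.exp_le_one_iff.2 (by nlinarith))

lemma integrableOn_exp_mul (hc : 0 ≤ c) (hf : Integrable f) (x : ℝ) :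
    IntegrableOn (fun y => (Real.exp (-(c * (y - x))) : ℂ) * f y) (Ici x) :=
  hf.norm.integrableOn.mono'
    (((Continuous.aestronglyMeasurable (by fun_prop)).mul hf.1).restrict)
    ((ae_restrict_mem measurableSet_Ici).mono fun _ hy => norm_exp_mul_le hc hy _)

lemma norm_invSubDeriv_le (hc : 0 ≤ c) (hf : Integrable f) (x : ℝ) :
    ‖invSubDeriv c f x‖ ≤ ∫ y, ‖f y‖ :=
  calc ‖invSubDeriv c f x‖ ≤ ∫ y in Ici x, ‖f y‖ :=
        norm_integral_le_of_norm_le hf.norm.integrableOn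
          ((ae_restrict_mem measurableSet_Ici).mono fun _ hy => norm_exp_mul_le hc hy _)
    _ ≤ ∫ y, ‖f y‖ := setIntegral_le_integral hf.norm (ae_of_all _ fun _ => norm_nonneg _)

lemma hasDerivAt_setIntegral_Ici {E : Type*} [NormedAddCommGroup E] [NormedSpace ℝ E]
    [CompleteSpace E] {φ : ℝ → E} (hφ : ∀ p, IntegrableOn φ (Ici p)) (hφc : Continuous φ)
    (x : ℝ) : HasDerivAt (fun t => ∫ y in Ici t, φ y) (-φ x) x := by
  have h : (fun t => ∫ y in Ici t, φ y) = fun t => (∫ y in Ici x, φ y) - ∫ y in x..t, φ y := by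
    funext t
    rw [← intervalIntegral.integral_Ici_sub_Ici' (hφ x) (hφ t), sub_sub_cancel]
  rw [h]
  exact (intervalIntegral.integral_hasDerivAt_right (hφc.intervalIntegrable _ _)
    (hφc.stronglyMeasurableAtFilter _ _) hφc.continuousAt).const_sub _

lemma invSubDeriv_eq_exp_mul (f : ℝ → ℂ) (x : ℝ) :
    invSubDeriv c f x =
      Real.exp (c * x) * ∫ y in Ici x, (Real.exp (-(c * y)) : ℂ) * f y := by
  rw [invSubDeriv, ← integral_const_mul]
  congr 1 with y
  rw [← mul_assoc, ← Complex.ofReal_mul, ← Real.exp_add]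
  ring_nf

lemma hasDerivAt_invSubDeriv (hc : 0 ≤ c) (hf : Integrable f) (hfc : Continuous f) (x : ℝ) :
    HasDerivAt (invSubDeriv c f) (c * invSubDeriv c f x - f x) x := by
  have hint : ∀ p, IntegrableOn (fun y => (Real.exp (-(c * y)) : ℂ) * f y) (Ici p) := by
    intro p
    refine IntegrableOn.congr_fun ((integrableOn_exp_mul hc hf p).const_mul
      (Real.exp (-(c * p)) : ℂ)) (fun y _ => ?_) measurableSet_Ici
    rw [← mul_assoc, ← Complex.ofReal_mul, ← Real.exp_add]
    ring_nf
  have hexp : HasDerivAt (fun t : ℝ => (Real.exp (c * t) : ℂ)) (c * Real.exp (c * x)) x := by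
    simpa [mul_comm] using (((hasDerivAt_id x).const_mul c).exp).ofReal_comp
  rw [show invSubDeriv c f = _ from funext fun t => invSubDeriv_eq_exp_mul f t]
  refine (hexp.mul (hasDerivAt_setIntegral_Ici hint (by fun_prop) x)).congr_deriv ?_
  have hcancel : (Real.exp (c * x) : ℂ) * Real.exp (-(c * x)) = 1 := by
    rw [← Complex.ofReal_mul, ← Real.exp_add, add_neg_cancel, Real.exp_zero, Complex.ofReal_one]
  beta_reduce
  linear_combination (-f x) * hcancel

lemma invSubDeriv_deriv (hc : 0 ≤ c) (hf : ∀ y, HasDerivAt f (f' y) y) (hfi : Integrable f)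
    (hf'i : Integrable f') (hlim : Tendsto f atTop (𝓝 0)) (x : ℝ) :
    invSubDeriv c f' x = c * invSubDeriv c f x - f x := by
  have hk : ∀ y, HasDerivAt (fun y : ℝ => (Real.exp (-(c * (y - x))) : ℂ))
      (-c * Real.exp (-(c * (y - x)))) y := fun y => by
    simpa [mul_comm] using ((((hasDerivAt_id y).sub_const x).const_mul c).neg.exp).ofReal_comp
  have hcont : Continuous fun y => (Real.exp (-(c * (y - x))) : ℂ) * f y :=
    (by fun_prop : Continuous fun y : ℝ => (Real.exp (-(c * (y - x))) : ℂ)).mul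
      (continuous_iff_continuousAt.2 fun y => (hf y).continuousAt)
  have h0 : Tendsto (fun y => (Real.exp (-(c * (y - x))) : ℂ) * f y) (𝓝[>] x) (𝓝 (f x)) := by
    simpa using (hcont.tendsto x).mono_left nhdsWithin_le_nhds
  have htop : Tendsto (fun y => (Real.exp (-(c * (y - x))) : ℂ) * f y) atTop (𝓝 0) :=
    squeeze_zero_norm' ((eventually_ge_atTop x).mono fun y hy => norm_exp_mul_le hc hy _)
      (by simpa using hlim.norm)
  have hibp := integral_Ioi_mul_deriv_eq_deriv_mul (fun y _ => hk y) (fun y _ => hf y)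
    ((integrableOn_exp_mul hc hf'i x).mono_set Ioi_subset_Ici_self)
    (IntegrableOn.congr_fun
      (((integrableOn_exp_mul hc hfi x).mono_set Ioi_subset_Ici_self).const_mul (-c : ℂ))
      (fun y _ => by simp only [Pi.mul_apply]; ring) measurableSet_Ioi) h0 htop
  simp only [invSubDeriv, integral_Ici_eq_integral_Ioi]
  rw [hibp]
  simp only [neg_mul, mul_assoc, integral_neg, integral_const_mul]
  ring

lemma invSubDeriv_mul_add_mul (hc : 0 ≤ c) (hf : Integrable f) (hg : Integrable g)
    (α β : ℂ) (x : ℝ) :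
    invSubDeriv c (fun y => α * f y + β * g y) x =
      α * invSubDeriv c f x + β * invSubDeriv c g x := by
  simp only [invSubDeriv, mul_add, mul_left_comm _ α, mul_left_comm _ β]
  rw [integral_add ((integrableOn_exp_mul hc hf x).const_mul α)
    ((integrableOn_exp_mul hc hg x).const_mul β), integral_const_mul, integral_const_mul]

lemma setIntegral_exp_mul_pairing (hc : 0 ≤ c) (hf : Integrable f) (hg : Integrable g)
    (x : ℝ) :
    ∫ y in Ici x, (Real.exp (-(c * (y - x))) : ℂ) * (f y * star (g x) + g y * star (f x)) =
      invSubDeriv c f x * star (g x) + invSubDeriv c g x * star (f x) := by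
  simp only [mul_add, ← mul_assoc]
  rw [integral_add ((integrableOn_exp_mul hc hf x).mul_const _)
    ((integrableOn_exp_mul hc hg x).mul_const _), integral_mul_const, integral_mul_const]
  rfl

open SchwartzMap

lemma hasDerivAt_invSubDeriv_schwartz (hc : 0 ≤ c) (f : 𝓢(ℝ, ℂ)) (x : ℝ) :
    HasDerivAt (invSubDeriv c f) (invSubDeriv c (derivCLM ℝ ℂ f) x) x := by
  rw [invSubDeriv_deriv (f' := derivCLM ℝ ℂ f) hc f.hasDerivAt f.integrable
    (derivCLM ℝ ℂ f).integrable (f.tendsto_cocompact.mono_left atTop_le_cocompact) x]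
  exact hasDerivAt_invSubDeriv hc f.integrable f.continuous x

lemma integrable_invSubDeriv_mul_star (hc : 0 ≤ c) (f g : 𝓢(ℝ, ℂ)) :
    Integrable fun x => invSubDeriv c f x * star (g x) :=
  (g.integrable.norm.mono' g.continuous.star.aestronglyMeasurable
      (ae_of_all _ fun x => (norm_star (g x)).le)).bdd_mul
    (continuous_iff_continuousAt.2 fun x =>
      (hasDerivAt_invSubDeriv_schwartz hc f x).continuousAt).aestronglyMeasurable
    (ae_of_all _ (norm_invSubDeriv_le hc f.integrable))

lemma integral_invSubDeriv_deriv_mul_star (hc : 0 ≤ c) (f g : 𝓢(ℝ, ℂ)) :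
    ∫ x, invSubDeriv c (derivCLM ℝ ℂ f) x * star (g x) =
      -∫ x, invSubDeriv c f x * star (derivCLM ℝ ℂ g x) := by
  rw [integral_mul_deriv_eq_deriv_mul_of_integrable (v' := fun x => star (derivCLM ℝ ℂ g x))
    (fun x _ => hasDerivAt_invSubDeriv_schwartz hc f x) (fun x _ => (g.hasDerivAt x).star)
    (integrable_invSubDeriv_mul_star hc f (derivCLM ℝ ℂ g))
    (integrable_invSubDeriv_mul_star hc (derivCLM ℝ ℂ f) g)
    (integrable_invSubDeriv_mul_star hc f g), neg_neg]

def linearPart (α β : ℂ) (u : 𝓢(ℝ, ℂ)) : 𝓢(ℝ, ℂ) :=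
  α • derivCLM ℝ ℂ (derivCLM ℝ ℂ u) + β • derivCLM ℝ ℂ (derivCLM ℝ ℂ (derivCLM ℝ ℂ u))

lemma integral_invSubDeriv_linearPart_pairing (hc : 0 ≤ c) (u : 𝓢(ℝ, ℂ)) {α β : ℂ}
    (hα : star α = -α) (hβ : star β = β) :
    ∫ x, (invSubDeriv c (linearPart α β u) x * star (u x) +
      invSubDeriv c u x * star (linearPart α β u x)) = 0 := by
  set u₁ := derivCLM ℝ ℂ u
  set u₂ := derivCLM ℝ ℂ u₁
  set u₃ := derivCLM ℝ ℂ u₂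
  have hsymm : ∫ x, invSubDeriv c u₂ x * star (u x) = ∫ x, invSubDeriv c u x * star (u₂ x) := by
    rw [integral_invSubDeriv_deriv_mul_star hc, integral_invSubDeriv_deriv_mul_star hc, neg_neg]
  have hskew : ∫ x, invSubDeriv c u₃ x * star (u x) = -∫ x, invSubDeriv c u x * star (u₃ x) := by
    rw [integral_invSubDeriv_deriv_mul_star hc, integral_invSubDeriv_deriv_mul_star hc,
      integral_invSubDeriv_deriv_mul_star hc, neg_neg]
  have hexpand : ∀ x, invSubDeriv c (linearPart α β u) x * star (u x) +
      invSubDeriv c u x * star (linearPart α β u x) =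
        α * (invSubDeriv c u₂ x * star (u x)) + β * (invSubDeriv c u₃ x * star (u x)) +
          (star α * (invSubDeriv c u x * star (u₂ x)) +
            star β * (invSubDeriv c u x * star (u₃ x))) := fun x => by
    rw [show ⇑(linearPart α β u) = fun y => α * u₂ y + β * u₃ y from rfl,
      invSubDeriv_mul_add_mul hc u₂.integrable u₃.integrable]
    simp only [star_add, star_mul']
    ring
  have hint := integrable_invSubDeriv_mul_star hc (c := c)
  rw [integral_congr_ae (ae_of_all _ hexpand), integral_add, integral_add, integral_add,
    integral_const_mul, integral_const_mul, integral_const_mul, integral_const_mul,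
    hsymm, hskew, hα, hβ]
  · ring
  all_goals first
    | exact (hint _ _).const_mul _
    | exact ((hint _ _).const_mul _).add ((hint _ _).const_mul _)

end LinearPartTrace

end

theorem linear_part_trace_vanishes (a b k : ℝ) (hk : 0 < k) (u : SchwartzMap ℝ ℂ) :
    (∫ x : ℝ, ∫ y in Set.Ici x,
        ((Real.exp (-2 * k * (y - x)) : ℝ) : ℂ) *
          ((Complex.I * (a : ℂ) * deriv (deriv (fun z => u z)) y
              + (b : ℂ) * deriv (deriv (deriv (fun z => u z))) y) * (starRingEnd ℂ) (u x)
            + u y * (starRingEnd ℂ)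
                (Complex.I * (a : ℂ) * deriv (deriv (fun z => u z)) x
                  + (b : ℂ) * deriv (deriv (deriv (fun z => u z))) x))).re = 0 := by
  open LinearPartTrace in
  have hc : 0 ≤ 2 * k := by positivity
  have hL : ∀ y, Complex.I * (a : ℂ) * deriv (deriv (fun z => u z)) y
      + (b : ℂ) * deriv (deriv (deriv (fun z => u z))) y = linearPart (Complex.I * a) b u y :=
    fun _ => rfl
  simp only [hL, neg_mul, starRingEnd_apply]
  rw [integral_congr_ae (ae_of_all _ fun x =>
      setIntegral_exp_mul_pairing hc (linearPart _ _ u).integrable u.integrable x),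
    integral_invSubDeriv_linearPart_pairing hc u (by simp) (by simp), Complex.zero_re]
end
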